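/- arXiv:2501.15751 — 2 statements merged into one kernel-verified Lean document; each statement's English description precedes it below -/
import Mathlib

section
/- Mangat's randomized response mechanism satisfies (ln(1/(1-p)), ln(1-p), 0)-asymmetric differential privacy on sets: for any set S and element x, if S' = S \ {x}, then Pr[x ∈ A(S)] / Pr[x ∈ A(S')] = 1/(1-p), and if S' = S ∪ {x} with x ∉ S, then Pr[x ∈ A(S)] / Pr[x ∈ A(S')] = 1-p. -/
/- Each coordinate of the output is drawn independently, so summing the product weights over all
outputs containing `x` factors as the weight of `x` being present times the total weights of the
other coordinates. Every coordinate's total weight is `1`, so `Pr[x ∈ A(S)]` is `1` for `x ∈ S`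
and `1 - p` otherwise, and both ratios are read off from these two values. -/

/-- Mangat's randomized response: each `x ∈ S` is kept with probability 1,
each `x ∉ S` is added independently with probability `1 - p`.  The probability
that the output set is exactly `T`. -/
def mangatProb {U : Type*} [Fintype U] [DecidableEq U] (p : ℝ) (S T : Finset U) : ℝ :=
  ∏ x : U, if x ∈ S then (if x ∈ T then 1 else 0) else (if x ∈ T then 1 - p else p)

/-- Probability that `x` belongs to the output of Mangat's mechanism on input `S`. -/
def mangatMemProb {U : Type*} [Fintype U] [DecidableEq U] (p : ℝ) (S : Finset U) (x : U) : ℝ :=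
  ∑ T : Finset U, if x ∈ T then mangatProb p S T else 0

namespace Fintype

variable {ι R : Type*} [Fintype ι] [DecidableEq ι] [CommSemiring R]

theorem sum_prod_ite_mem (f g : ι → R) :
    ∑ t : Finset ι, ∏ i, (if i ∈ t then f i else g i) = ∏ i, (f i + g i) := by
  rw [Fintype.prod_add]
  refine Finset.sum_congr rfl fun t _ => ?_
  rw [Finset.prod_ite]
  simp [Finset.filter_notMem_eq_sdiff, Finset.compl_eq_univ_sdiff]

theorem sum_ite_mem_prod_ite_mem (f g : ι → R) (a : ι) :
    ∑ t : Finset ι, (if a ∈ t then ∏ i, (if i ∈ t then f i else g i) else 0) =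
      f a * ∏ i ∈ Finset.univ.erase a, (f i + g i) := by
  have summand_eq (t : Finset ι) : (if a ∈ t then ∏ i, (if i ∈ t then f i else g i) else 0) =
      ∏ i, (if i ∈ t then f i else Function.update g a 0 i) := by
    split_ifs with hat
    · refine Finset.prod_congr rfl fun i _ => ?_
      split_ifs with hit
      · rfl
      · rw [Function.update_of_ne (ne_of_mem_of_not_mem hat hit).symm]
    · exact (Finset.prod_eq_zero (Finset.mem_univ a) (by simp [hat])).symm
  simp_rw [summand_eq, sum_prod_ite_mem, ← Finset.mul_prod_erase _ _ (Finset.mem_univ a),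
    Function.update_self, add_zero]
  congr 1
  refine Finset.prod_congr rfl fun i hi => ?_
  rw [Function.update_of_ne (Finset.ne_of_mem_erase hi)]

end Fintype

section Mangat

variable {U : Type*} [Fintype U] [DecidableEq U]

theorem mangatProb_eq_prod (p : ℝ) (S T : Finset U) :
    mangatProb p S T =
      ∏ y, if y ∈ T then (if y ∈ S then 1 else 1 - p) else (if y ∈ S then 0 else p) := by
  unfold mangatProb
  refine Finset.prod_congr rfl fun y _ => ?_
  split_ifs <;> rfl

theorem mangatMemProb_eq (p : ℝ) (S : Finset U) (x : U) :
    mangatMemProb p S x = if x ∈ S then 1 else 1 - p := by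
  have total_weight_eq_one (y : U) :
      ((if y ∈ S then 1 else 1 - p) + (if y ∈ S then 0 else p) : ℝ) = 1 := by
    split_ifs <;> ring
  simp_rw [mangatMemProb, mangatProb_eq_prod, Fintype.sum_ite_mem_prod_ite_mem,
    total_weight_eq_one, Finset.prod_const_one, mul_one]

end Mangat

theorem mangat_asymmetric_dp_general {U : Type*} [Fintype U] [DecidableEq U]
    (p : ℝ) (S : Finset U) (x : U) :
    (x ∈ S → mangatMemProb p S x / mangatMemProb p (S.erase x) x = 1 / (1 - p)) ∧
    (x ∉ S → mangatMemProb p S x / mangatMemProb p (insert x S) x = 1 - p) := by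
  refine ⟨fun hx => ?_, fun hx => ?_⟩ <;> simp [mangatMemProb_eq, hx]

/-- Mangat's randomized response satisfies `(ln(1/(1-p)), ln(1-p), 0)`-asymmetric
differential privacy on sets: removing an element `x ∈ S` changes the probability of
`x` being in the output by exactly a factor `1/(1-p)`, and adding an element `x ∉ S`
changes it by exactly a factor `1-p`. -/
theorem mangat_asymmetric_dp {U : Type*} [Fintype U] [DecidableEq U]
    (p : ℝ) (hp : p ∈ Set.Ioo (0 : ℝ) 1) (S : Finset U) (x : U) :
    (x ∈ S → mangatMemProb p S x / mangatMemProb p (S.erase x) x = 1 / (1 - p)) ∧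
    (x ∉ S → mangatMemProb p S x / mangatMemProb p (insert x S) x = 1 - p) :=
  mangat_asymmetric_dp_general p S x
end

section
/- Let p_fp ∈ [0,1], p_s ∈ (0,1), δ ∈ (0,1) with p_s > δ. Then the BP-test adversary's expected profit E = (p_s + p_fp^t(1-p_s))·((1/δ)(p_s + p_fp(1-p_s)) - (1/(1-δ))(1-p_fp)(1-p_s)) is bounded below by a positive constant independent of t, namely (1/δ)p_s² - (1/(1-δ))p_s(1-p_s) > 0. -/
/-! Writing `betProfit δ q` for the expected profit of a single bet that is correct with
probability `q`, the adversary's profit factors as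
`(ps + pfp ^ t * (1 - ps)) * betProfit δ (ps + pfp * (1 - ps))`.
Since `betProfit δ q = (q - δ) / (δ (1 - δ))` is increasing in `q` and positive for `q > δ`,
shrinking both factors to their values at `pfp = 0` gives the `t`-independent bound
`ps * betProfit δ ps > 0`. -/

noncomputable def betProfit (δ q : ℝ) : ℝ :=
  1 / δ * q - 1 / (1 - δ) * (1 - q)

theorem betProfit_eq_div {δ : ℝ} (hδ₀ : δ ≠ 0) (hδ₁ : δ ≠ 1) (q : ℝ) :
    betProfit δ q = (q - δ) / (δ * (1 - δ)) := by
  have : 1 - δ ≠ 0 := sub_ne_zero.2 hδ₁.symm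
  unfold betProfit
  field_simp
  ring

theorem betProfit_pos {δ q : ℝ} (hδ : δ ∈ Set.Ioo (0 : ℝ) 1) (hq : δ < q) :
    0 < betProfit δ q := by
  obtain ⟨hδ₀, hδ₁⟩ := hδ
  rw [betProfit_eq_div hδ₀.ne' hδ₁.ne]
  exact div_pos (sub_pos.2 hq) (mul_pos hδ₀ (sub_pos.2 hδ₁))

theorem betProfit_mono {δ : ℝ} (hδ : δ ∈ Set.Ioo (0 : ℝ) 1) : Monotone (betProfit δ) := by
  obtain ⟨hδ₀, hδ₁⟩ := hδ
  intro q r hqr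
  simp only [betProfit_eq_div hδ₀.ne' hδ₁.ne]
  gcongr

/-- If `p_s > δ`, the BP-test adversary's expected profit is bounded below by the
positive constant `(1/δ)p_s² - (1/(1-δ))p_s(1-p_s)`, independently of `t`. -/
theorem bp_profit_positive_lower_bound (ps pfp δ : ℝ) (t : ℕ)
    (hpfp : pfp ∈ Set.Icc (0 : ℝ) 1) (hps : ps ∈ Set.Ioo (0 : ℝ) 1)
    (hδ : δ ∈ Set.Ioo (0 : ℝ) 1) (hgt : ps > δ) :
    ((ps + pfp ^ t * (1 - ps)) *
        ((1 / δ) * (ps + pfp * (1 - ps)) - (1 / (1 - δ)) * (1 - pfp) * (1 - ps))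
      ≥ (1 / δ) * ps ^ 2 - (1 / (1 - δ)) * (ps * (1 - ps))) ∧
    0 < (1 / δ) * ps ^ 2 - (1 / (1 - δ)) * (ps * (1 - ps)) := by
  have hmiss : 0 ≤ 1 - ps := sub_nonneg.2 hps.2.le
  have hsat : ps ≤ ps + pfp ^ t * (1 - ps) :=
    le_add_of_nonneg_right (mul_nonneg (pow_nonneg hpfp.1 t) hmiss)
  have hbet : betProfit δ ps ≤ betProfit δ (ps + pfp * (1 - ps)) :=
    betProfit_mono hδ (le_add_of_nonneg_right (mul_nonneg hpfp.1 hmiss))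
  have hpos : 0 < betProfit δ ps := betProfit_pos hδ hgt
  have hbound : (1 / δ) * ps ^ 2 - (1 / (1 - δ)) * (ps * (1 - ps)) = ps * betProfit δ ps := by
    unfold betProfit; ring
  rw [hbound]
  refine ⟨?_, mul_pos hps.1 hpos⟩
  calc (ps + pfp ^ t * (1 - ps)) *
        ((1 / δ) * (ps + pfp * (1 - ps)) - (1 / (1 - δ)) * (1 - pfp) * (1 - ps))
      = (ps + pfp ^ t * (1 - ps)) * betProfit δ (ps + pfp * (1 - ps)) := by
        unfold betProfit; ring
    _ ≥ ps * betProfit δ ps := mul_le_mul hsat hbet hpos.le (hps.1.le.trans hsat)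
end
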